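/- arXiv:2305.06117 — 2 statements merged into one kernel-verified Lean document; each statement's English description precedes it below -/
import Mathlib

section
/- Assume p is odd and e ≥ 1. Let a ∈ V_R with a ≠ 0, b := f_R(a,a)/2, u(x) := x^p − a^{p−1}x, Δ_0(x) := −(x/a)·((b/a)x − f_R(x,a)), and let R_1 be the unique additive polynomial of degree p^{e−1} with x·R(x) = u(x)·R_1(u(x)) + Δ_0(x)^p − Δ_0(x). Let a' ∈ V_R with a' ≠ 0 and ω_R(a,a') = 0, where ω_R(a,a') := f_R(a,a') − f_R(a',a). Then the identity Δ_0(x + a') + f_{R_1}(u(x), u(a')) = Δ_0(x) + Δ_0(a') + f_R(x,a') holds in F̄[x], where f_{R_1} is the polynomial associated to R_1 by the same formula as f_R is associated to R. -/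
open Finset Polynomial

/-- The additive polynomial `R(x) = ∑_{i=0}^e a_i x^{p^i}`, evaluated in any commutative ring. -/
def Rgen {A : Type*} [CommRing A] (p e : ℕ) (a : ℕ → A) (x : A) : A :=
  ∑ i ∈ Finset.range (e + 1), a i * x ^ p ^ i

/-- `E_R(x) = R(x)^{p^e} + ∑_{i=0}^e (a_i x)^{p^{e-i}}`. -/
def Egen {A : Type*} [CommRing A] (p e : ℕ) (a : ℕ → A) (x : A) : A :=
  Rgen p e a x ^ p ^ e + ∑ i ∈ Finset.range (e + 1), (a i * x) ^ p ^ (e - i)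

/-- `f_R(x,y) = -∑_{i=0}^{e-1} ( ∑_{j=0}^{e-i-1} (a_i x^{p^i} y)^{p^j} + (x R(y))^{p^i} )`. -/
def fgen {A : Type*} [CommRing A] (p e : ℕ) (a : ℕ → A) (x y : A) : A :=
  -∑ i ∈ Finset.range e,
    ((∑ j ∈ Finset.range (e - i), (a i * x ^ p ^ i * y) ^ p ^ j) + (x * Rgen p e a y) ^ p ^ i)

/-- The set `H_R = {(a,b) : E_R(a) = 0, b^p - b = a R(a)}`. -/
def Hset {K : Type*} [CommRing K] (p e : ℕ) (a : ℕ → K) : Set (K × K) :=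
  {h | Egen p e a h.1 = 0 ∧ h.2 ^ p - h.2 = h.1 * Rgen p e a h.1}

/-- The group law `(a,b)·(a',b') = (a+a', b+b'+f_R(a,a'))` on `H_R`. -/
def Hmul {K : Type*} [CommRing K] (p e : ℕ) (a : ℕ → K) (h h' : K × K) : K × K :=
  (h.1 + h'.1, h.2 + h'.2 + fgen p e a h.1 h'.1)

/-! Let `D` be the difference of the two sides. Apply `P ↦ P ^ p - P` and use the relation
defining `R₁`, the identity `f^p - f = x R(y) + y R(x) - x^{p^d} E(y)` for `f_R` and `f_{R₁}`,
and `E_R(a') = 0`: everything cancels except `-E_{R₁}(u(a')) u^{p^{e-1}}`, which is divisible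
by `x^{p^{e-1}}`. As `D(0) = 0`, the cofactor `D^{p-1} - 1` of `D^p - D = D (D^{p-1} - 1)` is
prime to `x`, so `x^{p^{e-1}}` divides `D`. The quadratic part of `Δ₀` cancels in `D`, so `D`
has degree at most `p^{e-1}`; and `D(a) = f_R(a',a) - f_R(a,a') = 0`. Hence `D = 0`. -/

section Frobenius
variable {A : Type*} [CommRing A] {p₀ n p : ℕ} [ExpChar A p₀]

theorem add_pow_pow_of_eq_expChar_pow (hp : p = p₀ ^ n) (x y : A) (i : ℕ) :
    (x + y) ^ p ^ i = x ^ p ^ i + y ^ p ^ i := by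
  subst hp; rw [← pow_mul]; exact add_pow_expChar_pow x y p₀ (n * i)

theorem add_pow_of_eq_expChar_pow (hp : p = p₀ ^ n) (x y : A) :
    (x + y) ^ p = x ^ p + y ^ p := by
  subst hp; exact add_pow_expChar_pow x y p₀ n

theorem sub_pow_of_eq_expChar_pow (hp : p = p₀ ^ n) (x y : A) :
    (x - y) ^ p = x ^ p - y ^ p := by
  subst hp; exact sub_pow_expChar_pow x y n

theorem sum_pow_of_eq_expChar_pow (hp : p = p₀ ^ n) {ι : Type*} (t : Finset ι) (f : ι → A) :
    (∑ k ∈ t, f k) ^ p = ∑ k ∈ t, f k ^ p := by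
  subst hp; exact map_sum (iterateFrobenius A p₀ n) f t

theorem sum_range_pow_pow_pow_sub_self (hp : p = p₀ ^ n) (t : A) (m : ℕ) :
    (∑ j ∈ range m, t ^ p ^ j) ^ p - ∑ j ∈ range m, t ^ p ^ j = t ^ p ^ m - t := by
  simp_rw [sum_pow_of_eq_expChar_pow hp, ← pow_mul, ← pow_succ]
  simpa using sum_range_sub (fun j => t ^ p ^ j) m

end Frobenius

section Maps
variable {A B : Type*} [CommRing A] [CommRing B] (φ : A →+* B) (p d : ℕ) (s : ℕ → A)
  (x y : A)

theorem Rgen_map : φ (Rgen p d s x) = Rgen p d (fun i => φ (s i)) (φ x) := by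
  simp [Rgen]

theorem Egen_map : φ (Egen p d s x) = Egen p d (fun i => φ (s i)) (φ x) := by
  simp [Egen, Rgen_map]

theorem fgen_map : φ (fgen p d s x y) = fgen p d (fun i => φ (s i)) (φ x) (φ y) := by
  simp [fgen, Rgen_map]

theorem fgen_zero_left {p : ℕ} (hp : p ≠ 0) : fgen p d s 0 y = 0 := by
  simp [fgen, hp]

end Maps

section Additive
variable {A : Type*} [CommRing A] {p₀ n p : ℕ} [ExpChar A p₀]

theorem Rgen_add (hp : p = p₀ ^ n) (d : ℕ) (s : ℕ → A) (x y : A) :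
    Rgen p d s (x + y) = Rgen p d s x + Rgen p d s y := by
  simp [Rgen, add_pow_pow_of_eq_expChar_pow hp, mul_add, sum_add_distrib]

theorem fgen_add_left (hp : p = p₀ ^ n) (d : ℕ) (s : ℕ → A) (x x' y : A) :
    fgen p d s (x + x') y = fgen p d s x y + fgen p d s x' y := by
  simp only [fgen, ← neg_add, ← sum_add_distrib, add_pow_pow_of_eq_expChar_pow hp x x', mul_add,
    add_mul]
  congr 1
  refine sum_congr rfl fun i _ => ?_
  simp only [add_pow_pow_of_eq_expChar_pow hp, sum_add_distrib]
  ring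

theorem fgen_pow_sub_self (hp : p = p₀ ^ n) (hodd : Odd p) (d : ℕ) (s : ℕ → A) (x y : A) :
    fgen p d s x y ^ p - fgen p d s x y
      = x * Rgen p d s y + y * Rgen p d s x - x ^ p ^ d * Egen p d s y := by
  set t : ℕ → A := fun i => s i * x ^ p ^ i * y
  set v := x * Rgen p d s y
  have hf : fgen p d s x y
      = -(∑ i ∈ range d, ∑ j ∈ range (d - i), t i ^ p ^ j
          + ∑ i ∈ range d, v ^ p ^ i) := by
    simp only [fgen, sum_add_distrib, t, v]
  have hsum (m : ℕ) (f : ℕ → A) :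
      (∑ i ∈ range m, f i) ^ p - ∑ i ∈ range m, f i
        = ∑ i ∈ range m, (f i ^ p - f i) := by
    rw [sum_pow_of_eq_expChar_pow hp, sum_sub_distrib]
  have hsum_pow_t : ∑ i ∈ range d, t i ^ p ^ (d - i)
      = x ^ p ^ d * ∑ i ∈ range d, (s i * y) ^ p ^ (d - i) := by
    rw [mul_sum]
    refine sum_congr rfl fun i hi => ?_
    rw [← pow_mul_pow_sub p (mem_range.mp hi).le, pow_mul]
    simp only [t]; ring
  have hsum_t : ∑ i ∈ range d, t i = y * (Rgen p d s x - s d * x ^ p ^ d) := by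
    rw [Rgen, sum_range_succ, add_sub_cancel_right, mul_sum]
    exact sum_congr rfl fun i _ => by ring
  have hE : Egen p d s y
      = Rgen p d s y ^ p ^ d + ∑ i ∈ range d, (s i * y) ^ p ^ (d - i) + s d * y := by
    rw [Egen, sum_range_succ, Nat.sub_self, pow_zero, pow_one, add_assoc]
  have hAS_t : (∑ i ∈ range d, ∑ j ∈ range (d - i), t i ^ p ^ j) ^ p
      - ∑ i ∈ range d, ∑ j ∈ range (d - i), t i ^ p ^ j
      = x ^ p ^ d * ∑ i ∈ range d, (s i * y) ^ p ^ (d - i)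
        - y * (Rgen p d s x - s d * x ^ p ^ d) := by
    rw [hsum]
    simp only [sum_range_pow_pow_pow_sub_self hp]
    rw [sum_sub_distrib, hsum_pow_t, hsum_t]
  have hAS_v : (∑ i ∈ range d, v ^ p ^ i) ^ p - ∑ i ∈ range d, v ^ p ^ i
      = x ^ p ^ d * Rgen p d s y ^ p ^ d - v := by
    rw [sum_range_pow_pow_pow_sub_self hp, mul_pow]
  rw [hf, hodd.neg_pow, add_pow_of_eq_expChar_pow hp]
  linear_combination -hAS_t - hAS_v + x ^ p ^ d * hE

end Additive

section PolynomialMaps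
variable {K : Type*} [CommRing K] (p d : ℕ) (s : ℕ → K)

theorem Rgen_C_C (z : K) : Rgen p d (fun i => C (s i)) (C z) = C (Rgen p d s z) :=
  (Rgen_map C p d s z).symm

theorem Egen_C_C (z : K) : Egen p d (fun i => C (s i)) (C z) = C (Egen p d s z) :=
  (Egen_map C p d s z).symm

theorem fgen_C_C (x y : K) : fgen p d (fun i => C (s i)) (C x) (C y) = C (fgen p d s x y) :=
  (fgen_map C p d s x y).symm

theorem Rgen_C_comp (q r : K[X]) :
    (Rgen p d (fun i => C (s i)) q).comp r = Rgen p d (fun i => C (s i)) (q.comp r) := by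
  simpa using Rgen_map (compRingHom r) p d (fun i => C (s i)) q

theorem fgen_C_comp (q r : K[X]) (z : K) :
    (fgen p d (fun i => C (s i)) q (C z)).comp r
      = fgen p d (fun i => C (s i)) (q.comp r) (C z) := by
  simpa using fgen_map (compRingHom r) p d (fun i => C (s i)) q (C z)

theorem Rgen_C_eval (q : K[X]) (x : K) :
    (Rgen p d (fun i => C (s i)) q).eval x = Rgen p d s (q.eval x) := by
  simpa using Rgen_map (evalRingHom x) p d (fun i => C (s i)) q

theorem fgen_C_eval (q : K[X]) (x y : K) :
    (fgen p d (fun i => C (s i)) q (C y)).eval x = fgen p d s (q.eval x) y := by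
  simpa using fgen_map (evalRingHom x) p d (fun i => C (s i)) q (C y)

theorem fgen_C_mem_of_pow_mem {M : Submodule K K[X]} (q : K[X]) (z : K)
    (hq : ∀ m < d, q ^ p ^ m ∈ M) : fgen p d (fun i => C (s i)) q (C z) ∈ M := by
  refine M.neg_mem (M.sum_mem fun i hi => M.add_mem (M.sum_mem fun j hj => ?_) ?_)
  · have : (C (s i) * q ^ p ^ i * C z) ^ p ^ j = (s i * z) ^ p ^ j • q ^ p ^ (i + j) := by
      rw [smul_eq_C_mul, pow_add, pow_mul, C_pow, C_mul]; ring
    rw [this]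
    exact M.smul_mem _ (hq _ (by simp only [mem_range] at hi hj; omega))
  · rw [Rgen_C_C]
    have : (q * C (Rgen p d s z)) ^ p ^ i = Rgen p d s z ^ p ^ i • q ^ p ^ i := by
      rw [smul_eq_C_mul, C_pow]; ring
    rw [this]
    exact M.smul_mem _ (hq i (mem_range.mp hi))

end PolynomialMaps

section ArtinSchreier
variable {K : Type*} [Field K]

theorem X_pow_dvd_of_X_pow_dvd_pow_sub_self {p N : ℕ} {P : K[X]} (hp : 1 < p)
    (h0 : P.eval 0 = 0) (h : X ^ N ∣ P ^ p - P) : X ^ N ∣ P := by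
  have hcop : IsCoprime (X : K[X]) (P ^ (p - 1) - 1) := by
    rw [irreducible_X.coprime_iff_not_dvd, X_dvd_iff, coeff_zero_eq_eval_zero]
    simp [h0, zero_pow (show p - 1 ≠ 0 by omega)]
  have hfac : P ^ p - P = P * (P ^ (p - 1) - 1) := by
    rw [mul_sub, ← pow_succ', Nat.sub_add_cancel hp.le, mul_one]
  exact hcop.pow_left.dvd_of_dvd_mul_right (hfac ▸ h)

theorem eq_zero_of_X_pow_dvd_of_natDegree_le {N : ℕ} {P : K[X]} {α : K} (hN : X ^ N ∣ P)
    (hdeg : P.natDegree ≤ N) (hα : α ≠ 0) (hPα : P.eval α = 0) : P = 0 := by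
  have hcop : IsCoprime (X ^ N : K[X]) (X - C α) := by
    refine IsCoprime.pow_left ?_
    simpa using isCoprime_X_sub_C_of_isUnit_sub (a := 0) (b := α) (by simpa using hα)
  refine eq_zero_of_dvd_of_natDegree_lt (hcop.mul_dvd hN (dvd_iff_isRoot.mpr hPα)) ?_
  rw [natDegree_mul (by simp) (X_sub_C_ne_zero α), natDegree_X_pow, natDegree_X_sub_C]
  omega

end ArtinSchreier

section CocycleDefect
variable {K : Type*} [CommRing K]

noncomputable def cocycleDefect (p e : ℕ) (a : ℕ → K) (d : ℕ) (c : ℕ → K) (u Δ : K[X])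
    (α' : K) : K[X] :=
  Δ.comp (X + C α') + fgen p d (fun i => C (c i)) u (C (u.eval α'))
    - (Δ + C (Δ.eval α') + fgen p e (fun i => C (a i)) X (C α'))

variable {p₀ n p e d : ℕ} {a c : ℕ → K} {u Δ : K[X]} {α' : K}

theorem cocycleDefect_eval_zero (hp : p ≠ 0) (hΔ : Δ.eval 0 = 0) (hu : u.eval 0 = 0) :
    (cocycleDefect p e a d c u Δ α').eval 0 = 0 := by
  simp [cocycleDefect, eval_comp, fgen_C_eval, hu, hΔ, fgen_zero_left _ _ _ hp]

theorem cocycleDefect_pow_sub_self [ExpChar K p₀] (hp : p = p₀ ^ n) (hodd : Odd p)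
    (hD : Δ ^ p - Δ = X * Rgen p e (fun i => C (a i)) X - u * Rgen p d (fun i => C (c i)) u)
    (hu : u.comp (X + C α') = u + C (u.eval α')) (hα' : Egen p e a α' = 0) :
    cocycleDefect p e a d c u Δ α' ^ p - cocycleDefect p e a d c u Δ α'
      = -(C (Egen p d c (u.eval α')) * u ^ p ^ d) := by
  set β' := u.eval α'
  have hDτ : (Δ.comp (X + C α')) ^ p - Δ.comp (X + C α')
      = (X + C α') * (Rgen p e (fun i => C (a i)) X + C (Rgen p e a α'))
        - (u + C β') * (Rgen p d (fun i => C (c i)) u + C (Rgen p d c β')) := by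
    have h := congrArg (·.comp (X + C α')) hD
    simpa only [sub_comp, mul_comp, pow_comp, X_comp, Rgen_C_comp, hu, Rgen_add hp,
      Rgen_C_C] using h
  have hDα' : C (Δ.eval α') ^ p - C (Δ.eval α')
      = C α' * C (Rgen p e a α') - C β' * C (Rgen p d c β') := by
    have h := congrArg (fun P => C (P.eval α')) hD
    simpa only [eval_sub, eval_mul, eval_pow, eval_X, Rgen_C_eval, map_sub, map_mul,
      map_pow] using h
  have hfR := fgen_pow_sub_self hp hodd e (fun i => C (a i)) X (C α')
  have hf₁ := fgen_pow_sub_self hp hodd d (fun i => C (c i)) u (C β')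
  rw [Rgen_C_C, Egen_C_C, hα', map_zero, mul_zero, sub_zero] at hfR
  rw [Rgen_C_C, Egen_C_C] at hf₁
  simp only [cocycleDefect, sub_pow_of_eq_expChar_pow hp, add_pow_of_eq_expChar_pow hp]
  linear_combination hDτ + hf₁ - hD - hDα' - hfR

end CocycleDefect

section Delta
variable {K : Type*} [Field K] (p e : ℕ) (a : ℕ → K) (α : K)

-- `Δ₀ = -(x/a) L(x)` with `L` additive, so `Δ₀(x + a') - Δ₀(x) - Δ₀(a')` is bilinear.
noncomputable def linFactor : K[X] :=
  C (fgen p e a α α / 2 / α) * X - fgen p e (fun i => C (a i)) X (C α)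

noncomputable def delta0 : K[X] := -(C α⁻¹ * X) * linFactor p e a α

variable {p₀ n p e a α} {d : ℕ} {c : ℕ → K} {u : K[X]} {α' : K}

theorem linFactor_comp_X_add_C [ExpChar K p₀] (hp : p = p₀ ^ n) :
    (linFactor p e a α).comp (X + C α')
      = linFactor p e a α + C ((linFactor p e a α).eval α') := by
  simp only [linFactor, sub_comp, mul_comp, C_comp, X_comp, fgen_C_comp, fgen_add_left hp,
    fgen_C_C, eval_sub, eval_mul, eval_C, eval_X, fgen_C_eval, map_sub, map_mul]
  ring

theorem cocycleDefect_delta0 [ExpChar K p₀] (hp : p = p₀ ^ n) :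
    cocycleDefect p e a d c u (delta0 p e a α) α'
      = -C α⁻¹ * (C ((linFactor p e a α).eval α') * X + C α' * linFactor p e a α)
        + fgen p d (fun i => C (c i)) u (C (u.eval α'))
        - fgen p e (fun i => C (a i)) X (C α') := by
  simp only [cocycleDefect, delta0, mul_comp, neg_comp, C_comp, X_comp,
    linFactor_comp_X_add_C hp, eval_mul, eval_neg, eval_C, eval_X, map_mul, map_neg]
  ring

theorem cocycleDefect_delta0_eval_self [ExpChar K p₀] (hp : p = p₀ ^ n) (hp0 : p ≠ 0)
    (h2 : (2 : K) ≠ 0) (hα : α ≠ 0) (hu : u.eval α = 0) :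
    (cocycleDefect p e a d c u (delta0 p e a α) α').eval α
      = fgen p e a α' α - fgen p e a α α' := by
  rw [cocycleDefect_delta0 hp]
  simp only [linFactor, eval_add, eval_sub, eval_mul, eval_neg, eval_C, eval_X, fgen_C_eval, hu,
    fgen_zero_left _ _ _ hp0]
  field_simp
  ring

theorem natDegree_cocycleDefect_delta0_le [ExpChar K p₀] (hp : p = p₀ ^ n) (hp0 : 0 < p)
    (hu : u.natDegree ≤ p) :
    (cocycleDefect p e a (e - 1) c u (delta0 p e a α) α').natDegree ≤ p ^ (e - 1) := by
  have mem (Q : K[X]) (h : Q.natDegree ≤ p ^ (e - 1)) : Q ∈ degreeLE K ↑(p ^ (e - 1)) :=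
    mem_degreeLE.mpr (natDegree_le_iff_degree_le.mp h)
  have hX : X ∈ degreeLE K ↑(p ^ (e - 1)) :=
    mem _ (natDegree_X_le.trans (Nat.one_le_pow _ _ hp0))
  have hXpow (m : ℕ) (hm : m < e) : X ^ p ^ m ∈ degreeLE K ↑(p ^ (e - 1)) :=
    mem _ (by rw [natDegree_X_pow]; exact Nat.pow_le_pow_right hp0 (by omega))
  have hupow (m : ℕ) (hm : m < e - 1) : u ^ p ^ m ∈ degreeLE K ↑(p ^ (e - 1)) := by
    refine mem _ (natDegree_pow_le.trans ?_)
    calc p ^ m * u.natDegree ≤ p ^ (m + 1) := by rw [pow_succ]; exact Nat.mul_le_mul_left _ hu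
      _ ≤ p ^ (e - 1) := Nat.pow_le_pow_right hp0 (by omega)
  have hL : linFactor p e a α ∈ degreeLE K ↑(p ^ (e - 1)) := by
    rw [linFactor, ← smul_eq_C_mul]
    exact sub_mem (Submodule.smul_mem _ _ hX) (fgen_C_mem_of_pow_mem _ _ _ _ _ hXpow)
  rw [cocycleDefect_delta0 hp, natDegree_le_iff_degree_le, ← mem_degreeLE, neg_mul,
    ← smul_eq_C_mul, ← smul_eq_C_mul, ← smul_eq_C_mul]
  refine sub_mem (add_mem (neg_mem (Submodule.smul_mem _ _ (add_mem ?_ ?_))) ?_) ?_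
  · exact Submodule.smul_mem _ _ hX
  · exact Submodule.smul_mem _ _ hL
  · exact fgen_C_mem_of_pow_mem _ _ _ _ _ hupow
  · exact fgen_C_mem_of_pow_mem _ _ _ _ _ hXpow

end Delta

theorem X_pow_sub_C_mul_X_comp_X_add_C {K : Type*} [CommRing K] {p₀ n p : ℕ} [ExpChar K p₀]
    (hp : p = p₀ ^ n) (γ z : K) :
    (X ^ p - C γ * X : K[X]).comp (X + C z)
      = X ^ p - C γ * X + C ((X ^ p - C γ * X).eval z) := by
  simp only [sub_comp, mul_comp, pow_comp, X_comp, C_comp, add_pow_of_eq_expChar_pow hp, eval_sub,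
    eval_mul, eval_pow, eval_X, eval_C, map_sub, map_mul, map_pow]
  ring

theorem statement8_general {F K : Type*} [Field F] [Field K] [Algebra F K]
    (p₀ n p e : ℕ) (hp₀ : p₀.Prime) (hodd : Odd p₀) [CharP F p₀]
    (hn : 0 < n) (hpn : p = p₀ ^ n) (a : ℕ → F)
    (α : K) (hα0 : α ≠ 0)
    -- `R₁(z) = ∑_{i=0}^{e-1} c_i z^{p^i}` is the additive polynomial of the quotient step
    (c : ℕ → K)
    (hc : Polynomial.X * Rgen p e (fun i => Polynomial.C (algebraMap F K (a i))) Polynomial.X =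
      (Polynomial.X ^ p - Polynomial.C (α ^ (p - 1)) * Polynomial.X) *
        Rgen p (e - 1) (fun i => Polynomial.C (c i))
          (Polynomial.X ^ p - Polynomial.C (α ^ (p - 1)) * Polynomial.X) +
      (-(Polynomial.C α⁻¹ * Polynomial.X) *
        (Polynomial.C (fgen p e (fun i => algebraMap F K (a i)) α α / 2 / α) * Polynomial.X -
          fgen p e (fun i => Polynomial.C (algebraMap F K (a i))) Polynomial.X
            (Polynomial.C α))) ^ p -
      -(Polynomial.C α⁻¹ * Polynomial.X) *
        (Polynomial.C (fgen p e (fun i => algebraMap F K (a i)) α α / 2 / α) * Polynomial.X -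
          fgen p e (fun i => Polynomial.C (algebraMap F K (a i))) Polynomial.X
            (Polynomial.C α)))
    (α' : K) (hα'V : Egen p e (fun i => algebraMap F K (a i)) α' = 0)
    (hω : fgen p e (fun i => algebraMap F K (a i)) α α' =
      fgen p e (fun i => algebraMap F K (a i)) α' α) :
    let aK : ℕ → K := fun i => algebraMap F K (a i)
    let aP : ℕ → Polynomial K := fun i => Polynomial.C (aK i)
    let cP : ℕ → Polynomial K := fun i => Polynomial.C (c i)
    let u : Polynomial K := Polynomial.X ^ p - Polynomial.C (α ^ (p - 1)) * Polynomial.X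
    let Δ₀ : Polynomial K := -(Polynomial.C α⁻¹ * Polynomial.X) *
      (Polynomial.C (fgen p e aK α α / 2 / α) * Polynomial.X -
        fgen p e aP Polynomial.X (Polynomial.C α))
    Δ₀.comp (Polynomial.X + Polynomial.C α') +
        fgen p (e - 1) cP u (Polynomial.C (α' ^ p - α ^ (p - 1) * α')) =
      Δ₀ + Polynomial.C (Δ₀.eval α') + fgen p e aP Polynomial.X (Polynomial.C α') := by
  intro aK aP cP u Δ₀
  have : CharP K p₀ := charP_of_injective_algebraMap (algebraMap F K).injective p₀
  have : Fact p₀.Prime := ⟨hp₀⟩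
  have hp : 1 < p := hpn ▸ Nat.one_lt_pow hn.ne' hp₀.one_lt
  have h2 : (2 : K) ≠ 0 := Ring.two_ne_zero <| by
    rw [ringChar.eq K p₀]; rintro rfl; exact Nat.not_even_iff_odd.mpr hodd even_two
  have hD : delta0 p e aK α ^ p - delta0 p e aK α
      = X * Rgen p e aP X - u * Rgen p (e - 1) cP u := by
    have hc' : X * Rgen p e aP X
        = u * Rgen p (e - 1) cP u + delta0 p e aK α ^ p - delta0 p e aK α := hc
    linear_combination -hc'
  have huα : u.eval α = 0 := by
    simp only [u, eval_sub, eval_pow, eval_mul, eval_C, eval_X, ← pow_succ,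
      Nat.sub_add_cancel hp.le, sub_self]
  have hXu : X ∣ u := dvd_sub (dvd_pow_self X (by omega)) (dvd_mul_left X _)
  have hu' : u.eval α' = α' ^ p - α ^ (p - 1) * α' := by simp [u]
  rw [← sub_eq_zero, ← hu']
  change cocycleDefect p e aK (e - 1) c u (delta0 p e aK α) α' = 0
  refine eq_zero_of_X_pow_dvd_of_natDegree_le (X_pow_dvd_of_X_pow_dvd_pow_sub_self hp ?_ ?_)
    (natDegree_cocycleDefect_delta0_le hpn (by omega) ?_) hα0 ?_
  · exact cocycleDefect_eval_zero (by omega) (by simp [delta0]) (by simp [u]; omega)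
  · rw [cocycleDefect_pow_sub_self hpn (hpn ▸ hodd.pow) hD
      (X_pow_sub_C_mul_X_comp_X_add_C hpn _ _) hα'V]
    exact ((pow_dvd_pow_of_dvd hXu _).mul_left _).neg_right
  · show (X ^ p - C (α ^ (p - 1)) * X).natDegree ≤ p
    compute_degree; omega
  · rw [cocycleDefect_delta0_eval_self hpn (by omega) h2 hα0 huα, hω, sub_self]

/-- with the notation of the quotient step, for `a' ∈ V_R ∖ {0}` with
`ω_R(a,a') = 0`, the identity
`Δ₀(x + a') + f_{R₁}(u(x), u(a')) = Δ₀(x) + Δ₀(a') + f_R(x,a')` holds in `F̄[x]`. -/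
theorem statement8 {F K : Type*} [Field F] [Fintype F] [Field K] [IsAlgClosed K] [Algebra F K]
    (p₀ n p s q e : ℕ) (hp₀ : p₀.Prime) (hodd : Odd p₀) [CharP F p₀]
    (hn : 0 < n) (hpn : p = p₀ ^ n) (hs : 0 < s) (hq : q = p ^ s)
    (hcard : Fintype.card F = q) (a : ℕ → F) (hae : a e ≠ 0) (he : 1 ≤ e)
    (α : K) (hαV : Egen p e (fun i => algebraMap F K (a i)) α = 0) (hα0 : α ≠ 0)
    -- `R₁(z) = ∑_{i=0}^{e-1} c_i z^{p^i}` is the additive polynomial of the quotient step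
    (c : ℕ → K)
    (hc : Polynomial.X * Rgen p e (fun i => Polynomial.C (algebraMap F K (a i))) Polynomial.X =
      (Polynomial.X ^ p - Polynomial.C (α ^ (p - 1)) * Polynomial.X) *
        Rgen p (e - 1) (fun i => Polynomial.C (c i))
          (Polynomial.X ^ p - Polynomial.C (α ^ (p - 1)) * Polynomial.X) +
      (-(Polynomial.C α⁻¹ * Polynomial.X) *
        (Polynomial.C (fgen p e (fun i => algebraMap F K (a i)) α α / 2 / α) * Polynomial.X -
          fgen p e (fun i => Polynomial.C (algebraMap F K (a i))) Polynomial.X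
            (Polynomial.C α))) ^ p -
      -(Polynomial.C α⁻¹ * Polynomial.X) *
        (Polynomial.C (fgen p e (fun i => algebraMap F K (a i)) α α / 2 / α) * Polynomial.X -
          fgen p e (fun i => Polynomial.C (algebraMap F K (a i))) Polynomial.X
            (Polynomial.C α)))
    (α' : K) (hα'V : Egen p e (fun i => algebraMap F K (a i)) α' = 0) (hα'0 : α' ≠ 0)
    (hω : fgen p e (fun i => algebraMap F K (a i)) α α' =
      fgen p e (fun i => algebraMap F K (a i)) α' α) :
    let aK : ℕ → K := fun i => algebraMap F K (a i)
    let aP : ℕ → Polynomial K := fun i => Polynomial.C (aK i)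
    let cP : ℕ → Polynomial K := fun i => Polynomial.C (c i)
    let u : Polynomial K := Polynomial.X ^ p - Polynomial.C (α ^ (p - 1)) * Polynomial.X
    let Δ₀ : Polynomial K := -(Polynomial.C α⁻¹ * Polynomial.X) *
      (Polynomial.C (fgen p e aK α α / 2 / α) * Polynomial.X -
        fgen p e aP Polynomial.X (Polynomial.C α))
    Δ₀.comp (Polynomial.X + Polynomial.C α') +
        fgen p (e - 1) cP u (Polynomial.C (α' ^ p - α ^ (p - 1) * α')) =
      Δ₀ + Polynomial.C (Δ₀.eval α') + fgen p e aP Polynomial.X (Polynomial.C α') :=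
  statement8_general p₀ n p e hp₀ hodd hn hpn a α hα0 c hc α' hα'V hω
end

section
/- Assume p is odd, write q = p^s, and let A ⊆ V_R ∩ F_q be a maximal totally isotropic F_p-subspace, F_R(x) := Π_{α∈A}(x−α), c_A := (−1)^e·(a_e/2)·Π_{α∈A∖{0}} α^{−1} (for e ≥ 1; c_A := a_0 if e = 0). Let a(x) ∈ F_q[x] be an additive polynomial with x^q − x = a(F_R(x)), and for t ∈ F_q let b(t) := Σ_{i=0}^{s−1}(x R(x))^{p^i} − f_R(x, x^q − x) for any x with F_R(x) = t. Let Δ(x) ∈ F_q[x] satisfy x·R(x) = c_A·F_R(x)² + Δ(x)^p − Δ(x) and Δ(x+a) − Δ(x) = f_R(x,a) + f_R(a,a)/2 for all a ∈ A. Then for every t ∈ F_q, b(t) − f_R(a(t),a(t))/2 = Tr_{F_q/F_p}(c_A·t²). -/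
/-!
Since `A` is a finite additive group, `F_R` is an additive polynomial, and since `A ⊆ F_q` it
commutes with the `q`-power Frobenius. Hence for a root `x` of `F_R(x) = t ∈ F_q` the element
`α₀ = x^q - x` is a root of `F_R`, i.e. lies in `A`, and `α₀ = a(t)`. Writing
`x R(x) = c_A t² + δ^p - δ` with `δ = Δ(x)`, the sum `∑_{i<s} (x R(x))^{p^i}` telescopes to
`Tr(c_A t²) + δ^q - δ`, and `δ^q = Δ(x^q) = Δ(x + α₀)`; the shift equation of `Δ` at `α₀` then
turns `δ^q - δ - f_R(x, α₀)` into `f_R(α₀, α₀)/2`.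
-/

open Finset Polynomial

theorem map_Rgen {A B : Type*} [CommRing A] [CommRing B] (φ : A →+* B) (p e : ℕ) (a : ℕ → A)
    (x : A) : φ (Rgen p e a x) = Rgen p e (fun i => φ (a i)) (φ x) := by
  simp [Rgen]

theorem map_fgen {A B : Type*} [CommRing A] [CommRing B] (φ : A →+* B) (p e : ℕ) (a : ℕ → A)
    (x y : A) : φ (fgen p e a x y) = fgen p e (fun i => φ (a i)) (φ x) (φ y) := by
  simp [fgen, map_Rgen]

section FrobeniusOverFiniteField

variable {k R : Type*} [Field k] [Fintype k] [CommRing R] [Algebra k R]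

theorem aeval_pow_card (P : k[X]) (u : R) :
    aeval u P ^ Fintype.card k = aeval (u ^ Fintype.card k) P :=
  (aeval_algHom_apply (FiniteField.frobeniusAlgHom k R) u P).symm

theorem eval_prod_X_sub_C_pow_card {A : Finset R}
    (hA : ∀ α ∈ A, α ∈ Set.range (algebraMap k R)) (u : R) :
    (∏ α ∈ A, (X - C α)).eval u ^ Fintype.card k =
      (∏ α ∈ A, (X - C α)).eval (u ^ Fintype.card k) := by
  have hfix : ∀ α ∈ A, α ^ Fintype.card k = α := fun α hα => by
    obtain ⟨y, rfl⟩ := hA α hα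
    exact (FiniteField.frobeniusAlgHom k R).commutes y
  simp only [eval_prod, eval_sub, eval_X, eval_C, ← Finset.prod_pow]
  refine Finset.prod_congr rfl fun α hα => ?_
  have h := map_sub (FiniteField.frobeniusAlgHom k R) u α
  simpa only [FiniteField.coe_frobeniusAlgHom, hfix α hα] using h

theorem sum_pow_card_pow_of_eq_add_pow_card_sub {u c δ : R}
    (h : u = c + δ ^ Fintype.card k - δ) (s : ℕ) :
    ∑ i ∈ range s, u ^ Fintype.card k ^ i =
      ∑ i ∈ range s, c ^ Fintype.card k ^ i + (δ ^ Fintype.card k ^ s - δ) := by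
  have hφ : ∀ (i : ℕ) (z : R), (FiniteField.frobeniusAlgHom k R ^ i) z = z ^ Fintype.card k ^ i :=
    fun i z => by rw [AlgHom.coe_pow, FiniteField.coe_frobeniusAlgHom, pow_iterate]
  have htelescope := Finset.sum_range_sub (fun i => δ ^ Fintype.card k ^ i) s
  rw [pow_zero, pow_one] at htelescope
  rw [← htelescope, ← Finset.sum_add_distrib]
  refine Finset.sum_congr rfl fun i _ => ?_
  rw [← hφ, h, map_sub, map_add, hφ, hφ, hφ, pow_succ', pow_mul]
  ring

end FrobeniusOverFiniteField

theorem algebraMap_trace_eq_sum_pow_of_card_eq {k F : Type*} [Field k] [Fintype k] [Field F]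
    [Fintype F] [Algebra k F] {s : ℕ} (hcard : Fintype.card F = Fintype.card k ^ s) (z : F) :
    algebraMap k F (Algebra.trace k F z) = ∑ i ∈ range s, z ^ Fintype.card k ^ i := by
  have hs : Module.finrank k F = s := by
    refine Nat.pow_right_injective (Fintype.one_lt_card (α := k)) ?_
    change Fintype.card k ^ _ = Fintype.card k ^ s
    rw [← hcard, Module.card_eq_pow_finrank (K := k) (V := F)]
  rw [FiniteField.algebraMap_trace_eq_sum_pow, hs, Nat.card_eq_fintype_card]

section AdditivelyClosed

variable {K : Type*} [Field K] {A : Finset K}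

theorem prod_add_sub_eq_of_add_mem (hadd : ∀ x ∈ A, ∀ y ∈ A, x + y ∈ A) {α : K} (hα : α ∈ A)
    (u : K) : ∏ β ∈ A, (u + α - β) = ∏ β ∈ A, (u - β) := by
  have hshift : A.map (addRightEmbedding α) = A := by
    refine Finset.eq_of_subset_of_card_le (fun γ hγ => ?_) (Finset.card_map _).ge
    obtain ⟨β, hβ, rfl⟩ := Finset.mem_map.mp hγ
    exact hadd β hβ α hα
  conv_lhs => rw [← hshift, Finset.prod_map]
  exact Finset.prod_congr rfl fun β _ => by simp

theorem eval_prod_X_sub_C_add (hadd : ∀ x ∈ A, ∀ y ∈ A, x + y ∈ A) (hA : A.Nonempty)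
    (u v : K) : (∏ β ∈ A, (X - C β)).eval (u + v) =
      (∏ β ∈ A, (X - C β)).eval u + (∏ β ∈ A, (X - C β)).eval v := by
  set P : K[X] := ∏ β ∈ A, (X - C β)
  have hP : P.Monic := monic_prod_of_monic _ _ fun β _ => monic_X_sub_C β
  have hPv : (P.comp (X + C v)).Monic := hP.comp_X_add_C v
  have hPdeg : P.natDegree = #A := by simp [P]
  have hPvdeg : (P.comp (X + C v)).natDegree = #A := by simp [natDegree_comp, hPdeg]
  have hshift : P.comp (X + C v) - P = C (P.eval v) := by
    refine eq_of_degrees_lt_of_eval_finset_eq A ?_ ?_ fun α hα => ?_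
    · rw [← hPvdeg, ← degree_eq_natDegree hPv.ne_zero]
      refine degree_sub_lt_left ?_ hPv.ne_zero (by rw [hPv.leadingCoeff, hP.leadingCoeff])
      rw [degree_eq_natDegree hPv.ne_zero, degree_eq_natDegree hP.ne_zero, hPvdeg, hPdeg]
    · exact degree_C_le.trans_lt (by exact_mod_cast hA.card_pos)
    · simp only [P, eval_sub, eval_comp, eval_add, eval_X, eval_C, eval_prod]
      rw [add_comm, prod_add_sub_eq_of_add_mem hadd hα, Finset.prod_eq_zero hα (sub_self α)]
      ring
  simpa [sub_eq_iff_eq_add'] using congrArg (eval u) hshift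

theorem mem_of_eval_prod_X_sub_C_eq_zero {u : K} (hu : (∏ β ∈ A, (X - C β)).eval u = 0) :
    u ∈ A := by
  obtain ⟨β, hβ, hu⟩ := Finset.prod_eq_zero_iff.mp (by simpa [eval_prod] using hu)
  rwa [sub_eq_zero.mp hu]

end AdditivelyClosed

theorem statement15_general {Fp F K : Type*} [Field Fp] [Fintype Fp] [Field F] [Fintype F]
    [Field K] [Algebra Fp F] [Algebra F K]
    (p s q e : ℕ) (hq : q = p ^ s)
    (hcardp : Fintype.card Fp = p) (hcard : Fintype.card F = q)
    (a : ℕ → F)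
    -- `A ⊆ V_R ∩ F_q` a totally isotropic `F_p`-subspace with `#A = p^e` (i.e. maximal)
    (A : Finset K) (h0A : (0 : K) ∈ A)
    (hadd : ∀ x ∈ A, ∀ y ∈ A, x + y ∈ A)
    (hAF : ∀ x ∈ A, ∃ y : F, algebraMap F K y = x)
    -- `c_A`
    (cA : K)
    (cF : F) (hcF : algebraMap F K cF = cA)
    -- the additive polynomial `a(x) ∈ F_q[x]` with `x^q − x = a(F_R(x))`
    (aQ : Polynomial F)
    (haQ : ∀ x : K, x ^ q - x =
      (aQ.map (algebraMap F K)).eval ((∏ α ∈ A, (Polynomial.X - Polynomial.C α)).eval x))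
    -- `Δ(x) ∈ F_q[x]` with `x·R(x) = c_A F_R(x)² + Δ^p − Δ` and
    -- `Δ(x+a) − Δ(x) = f_R(x,a) + f_R(a,a)/2` for `a ∈ A`
    (Δ : Polynomial F)
    (hΔ1 : Polynomial.X * Rgen p e (fun i => Polynomial.C (algebraMap F K (a i))) Polynomial.X =
      Polynomial.C cA * (∏ α ∈ A, (Polynomial.X - Polynomial.C α)) ^ 2 +
        (Δ.map (algebraMap F K)) ^ p - Δ.map (algebraMap F K))
    (hΔ2 : ∀ α ∈ A,
      (Δ.map (algebraMap F K)).comp (Polynomial.X + Polynomial.C α) - Δ.map (algebraMap F K) =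
        fgen p e (fun i => Polynomial.C (algebraMap F K (a i))) Polynomial.X (Polynomial.C α) +
          Polynomial.C (fgen p e (fun i => algebraMap F K (a i)) α α / 2)) :
    let aK : ℕ → K := fun i => algebraMap F K (a i)
    let FR : Polynomial K := ∏ α ∈ A, (Polynomial.X - Polynomial.C α)
    let bval : K → K := fun x =>
      (∑ i ∈ Finset.range s, (x * Rgen p e aK x) ^ p ^ i) - fgen p e aK x (x ^ q - x)
    let aval : F → K := fun t => (aQ.map (algebraMap F K)).eval (algebraMap F K t)
    ∀ t : F, ∀ x : K, FR.eval x = algebraMap F K t →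
      bval x - fgen p e aK (aval t) (aval t) / 2 =
        algebraMap F K (algebraMap Fp F (Algebra.trace Fp F (cF * t ^ 2))) := by
  intro aK FR bval aval t x hx
  replace hx : (∏ α ∈ A, (X - C α)).eval x = algebraMap F K t := hx
  have haval : aval t = x ^ q - x := by rw [haQ x, hx]
  set α₀ := x ^ q - x
  have hα₀ : α₀ ∈ A := by
    refine mem_of_eval_prod_X_sub_C_eq_zero ?_
    have hxq : (∏ α ∈ A, (X - C α)).eval (x ^ q) = (∏ α ∈ A, (X - C α)).eval x := by
      rw [← hcard, ← eval_prod_X_sub_C_pow_card hAF, hx, ← map_pow, FiniteField.pow_card]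
    have hadditive := eval_prod_X_sub_C_add hadd ⟨0, h0A⟩ α₀ x
    rw [sub_add_cancel, hxq] at hadditive
    linear_combination -hadditive
  set ΔK := Δ.map (algebraMap F K)
  have hΔ1x : x * Rgen p e aK x = cA * algebraMap F K t ^ 2 + ΔK.eval x ^ p - ΔK.eval x := by
    have h := congrArg (eval x) hΔ1
    rw [← coe_evalRingHom, map_mul, map_Rgen] at h
    simpa [hx] using h
  have hΔ2x : ΔK.eval (x + α₀) - ΔK.eval x = fgen p e aK x α₀ + fgen p e aK α₀ α₀ / 2 := by
    have h := congrArg (eval x) (hΔ2 α₀ hα₀)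
    rw [← coe_evalRingHom, map_sub, map_add, map_fgen] at h
    simpa [add_comm] using h
  have hΔq : ΔK.eval x ^ q = ΔK.eval (x + α₀) := by
    rw [← hcard, eval_map_algebraMap, aeval_pow_card, hcard, add_sub_cancel, eval_map_algebraMap]
  have htelescope : ∑ i ∈ range s, (x * Rgen p e aK x) ^ p ^ i =
      ∑ i ∈ range s, (cA * algebraMap F K t ^ 2) ^ p ^ i + (ΔK.eval x ^ q - ΔK.eval x) := by
    let _ : Algebra Fp K := Algebra.compHom K (algebraMap Fp F)
    subst hcardp hq
    exact sum_pow_card_pow_of_eq_add_pow_card_sub hΔ1x s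
  have htrace : algebraMap F K (algebraMap Fp F (Algebra.trace Fp F (cF * t ^ 2))) =
      ∑ i ∈ range s, (cA * algebraMap F K t ^ 2) ^ p ^ i := by
    subst hcardp
    rw [algebraMap_trace_eq_sum_pow_of_card_eq (hcard.trans hq), map_sum]
    simp [hcF]
  simp only [bval]
  rw [htelescope, haval, hΔq, htrace]
  linear_combination hΔ2x

/-- with the notation of the quotient construction,
`b(t) − f_R(a(t),a(t))/2 = Tr_{F_q/F_p}(c_A·t²)` for every `t ∈ F_q`. -/
theorem statement15 {Fp F K : Type*} [Field Fp] [Fintype Fp] [Field F] [Fintype F]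
    [Field K] [IsAlgClosed K] [DecidableEq K] [Algebra Fp F] [Algebra F K]
    (p₀ n p s q e : ℕ) (hp₀ : p₀.Prime) (hodd : Odd p₀) [CharP F p₀]
    (hn : 0 < n) (hpn : p = p₀ ^ n) (hs : 0 < s) (hq : q = p ^ s)
    (hcardp : Fintype.card Fp = p) (hcard : Fintype.card F = q)
    (a : ℕ → F) (hae : a e ≠ 0)
    -- `A ⊆ V_R ∩ F_q` a totally isotropic `F_p`-subspace with `#A = p^e` (i.e. maximal)
    (A : Finset K) (h0A : (0 : K) ∈ A)
    (hadd : ∀ x ∈ A, ∀ y ∈ A, x + y ∈ A)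
    (hsmul : ∀ c : K, c ^ p = c → ∀ x ∈ A, c * x ∈ A)
    (hAV : ∀ x ∈ A, Egen p e (fun i => algebraMap F K (a i)) x = 0)
    (hAF : ∀ x ∈ A, ∃ y : F, algebraMap F K y = x)
    (hiso : ∀ x ∈ A, ∀ y ∈ A, fgen p e (fun i => algebraMap F K (a i)) x y =
      fgen p e (fun i => algebraMap F K (a i)) y x)
    (hcardA : A.card = p ^ e)
    -- `c_A`
    (cA : K) (hcA : cA = if e = 0 then algebraMap F K (a 0) else
      (-1) ^ e * (algebraMap F K (a e) / 2) * ∏ α ∈ A.erase 0, α⁻¹)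
    (cF : F) (hcF : algebraMap F K cF = cA)
    -- the additive polynomial `a(x) ∈ F_q[x]` with `x^q − x = a(F_R(x))`
    (aQ : Polynomial F)
    (haQadd : ∀ u v : K, (aQ.map (algebraMap F K)).eval (u + v) =
      (aQ.map (algebraMap F K)).eval u + (aQ.map (algebraMap F K)).eval v)
    (haQ : ∀ x : K, x ^ q - x =
      (aQ.map (algebraMap F K)).eval ((∏ α ∈ A, (Polynomial.X - Polynomial.C α)).eval x))
    -- `Δ(x) ∈ F_q[x]` with `x·R(x) = c_A F_R(x)² + Δ^p − Δ` and
    -- `Δ(x+a) − Δ(x) = f_R(x,a) + f_R(a,a)/2` for `a ∈ A`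
    (Δ : Polynomial F)
    (hΔ1 : Polynomial.X * Rgen p e (fun i => Polynomial.C (algebraMap F K (a i))) Polynomial.X =
      Polynomial.C cA * (∏ α ∈ A, (Polynomial.X - Polynomial.C α)) ^ 2 +
        (Δ.map (algebraMap F K)) ^ p - Δ.map (algebraMap F K))
    (hΔ2 : ∀ α ∈ A,
      (Δ.map (algebraMap F K)).comp (Polynomial.X + Polynomial.C α) - Δ.map (algebraMap F K) =
        fgen p e (fun i => Polynomial.C (algebraMap F K (a i))) Polynomial.X (Polynomial.C α) +
          Polynomial.C (fgen p e (fun i => algebraMap F K (a i)) α α / 2)) :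
    let aK : ℕ → K := fun i => algebraMap F K (a i)
    let FR : Polynomial K := ∏ α ∈ A, (Polynomial.X - Polynomial.C α)
    let bval : K → K := fun x =>
      (∑ i ∈ Finset.range s, (x * Rgen p e aK x) ^ p ^ i) - fgen p e aK x (x ^ q - x)
    let aval : F → K := fun t => (aQ.map (algebraMap F K)).eval (algebraMap F K t)
    ∀ t : F, ∀ x : K, FR.eval x = algebraMap F K t →
      bval x - fgen p e aK (aval t) (aval t) / 2 =
        algebraMap F K (algebraMap Fp F (Algebra.trace Fp F (cF * t ^ 2))) :=
  statement15_general p s q e hq hcardp hcard a A h0A hadd hAF cA cF hcF aQ haQ Δ hΔ1 hΔ2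
end
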